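/- arXiv:1901.10709 — 4 statements merged into one kernel-verified Lean document; each statement's English description precedes it below -/
import Mathlib

section
/- Suppose the environment p : ℤ → [ε₀, 1-ε₀] satisfies Σ(N) > √N for some N, where Σ is the potential. Then the nearest-neighbor walk (Z_t) started at 0 satisfies P(max_{t ≤ T} Z_t > N) < exp(-√N / 2) for T = exp(√N / 2). -/
open MeasureTheory

/-- The potential `Σ` of an environment `p : ℤ → (0,1)`. -/
noncomputable def pot (p : ℤ → ℝ) (n : ℤ) : ℝ :=
  if 1 ≤ n then ∑ j ∈ Finset.Icc 1 n, (Real.log (1 - p j) - Real.log (p j))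
  else -∑ j ∈ Finset.Icc (n + 1) 0, (Real.log (1 - p j) - Real.log (p j))

/-- The scale function `M(n) = ∑_{j=0}^{n-1} e^{Σ(j)}` for `n ≥ 1`,
`M(n) = -∑_{j=n}^{-1} e^{Σ(j)}` for `n ≤ -1`, `M(0)=0`. -/
noncomputable def scaleFn (p : ℤ → ℝ) (n : ℤ) : ℝ :=
  if 1 ≤ n then ∑ j ∈ Finset.Icc 0 (n - 1), Real.exp (pot p j)
  else -∑ j ∈ Finset.Icc n (-1), Real.exp (pot p j)

/-- `Z` is the nearest-neighbor random walk on `ℤ` in environment `p`, started at `z0`. -/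
structure IsNNWalk {Ω : Type*} [MeasurableSpace Ω] (P : Measure Ω)
    (p : ℤ → ℝ) (Z : ℕ → Ω → ℤ) (z0 : ℤ) : Prop where
  meas : ∀ t, Measurable (Z t)
  init : ∀ᵐ ω ∂P, Z 0 ω = z0
  stepUp : ∀ (t : ℕ) (z : ℕ → ℤ),
    P {ω | (∀ s ≤ t, Z s ω = z s) ∧ Z (t + 1) ω = z t + 1}
      = ENNReal.ofReal (p (z t)) * P {ω | ∀ s ≤ t, Z s ω = z s}
  stepDown : ∀ (t : ℕ) (z : ℕ → ℤ),
    P {ω | (∀ s ≤ t, Z s ω = z s) ∧ Z (t + 1) ω = z t - 1}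
      = ENNReal.ofReal (1 - p (z t)) * P {ω | ∀ s ≤ t, Z s ω = z s}

/-!
Write `M = scaleFn p` and `h = max M 0 / M (N + 1)`. The scale function `M` is harmonic for the
walk on `[1, ∞)` and `M ≤ 0` on `(-∞, 0]`, so the truncation costs at most `h 1 = 1 / M (N + 1)`
per step, at `0`. Hence `h (Z t) + (T - t) / M (N + 1)` is a supermartingale up to the first time
`Z` exceeds `N`, where `h ≥ 1`, and `P(Z exceeds N by time T) ≤ T / M (N + 1) ≤ T e^{-Σ(N)}`,
which is `< e^{-√N/2}` when `Σ(N) > √N` and `T ≤ e^{√N/2}`. Since `IsNNWalk` only specifies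
probabilities of path cylinders, the supermartingale argument is run as an induction on the number
of remaining steps, conditionally on the cylinder of the path so far.
-/

open Real

section Scale

variable {p : ℤ → ℝ}

lemma pot_eq_pot_sub_one_add {j : ℤ} (hj : 1 ≤ j) :
    pot p j = pot p (j - 1) + (log (1 - p j) - log (p j)) := by
  have hIcc : Finset.Icc 1 j = insert j (Finset.Icc 1 (j - 1)) := by
    ext; simp only [Finset.mem_Icc, Finset.mem_insert]; omega
  rw [pot, if_pos hj, hIcc, Finset.sum_insert (by simp), add_comm]
  congr 1
  unfold pot
  split_ifs with h
  · rfl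
  · rw [Finset.Icc_eq_empty (by omega), Finset.Icc_eq_empty (by omega)]
    simp

lemma balance (hp : ∀ j, p j ∈ Set.Ioo 0 1) {j : ℤ} (hj : 1 ≤ j) :
    p j * exp (pot p j) = (1 - p j) * exp (pot p (j - 1)) := by
  obtain ⟨hp0, hp1⟩ := hp j
  rw [pot_eq_pot_sub_one_add hj, exp_add, exp_sub, exp_log (by linarith), exp_log hp0]
  field_simp

lemma scaleFn_add_one (x : ℤ) : scaleFn p (x + 1) = scaleFn p x + exp (pot p x) := by
  rcases lt_trichotomy x 0 with hx | rfl | hx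
  · have hIcc : Finset.Icc x (-1) = insert x (Finset.Icc (x + 1) (-1)) := by
      ext; simp only [Finset.mem_Icc, Finset.mem_insert]; omega
    rw [scaleFn, scaleFn, if_neg (by omega), if_neg (by omega), hIcc,
      Finset.sum_insert (by simp)]
    ring
  · simp [scaleFn, pot]
  · have hIcc : Finset.Icc 0 x = insert x (Finset.Icc 0 (x - 1)) := by
      ext; simp only [Finset.mem_Icc, Finset.mem_insert]; omega
    rw [scaleFn, scaleFn, if_pos (by omega), if_pos (by omega : (1 : ℤ) ≤ x),
      add_sub_cancel_right, hIcc, Finset.sum_insert (by simp), add_comm]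

lemma scaleFn_mono : Monotone (scaleFn p) :=
  monotone_int_of_le_succ fun x => by
    rw [scaleFn_add_one]
    linarith [exp_pos (pot p x)]

lemma scaleFn_zero : scaleFn p 0 = 0 := by
  simp [scaleFn]

lemma scaleFn_one : scaleFn p 1 = 1 := by
  simpa [scaleFn_zero, pot] using scaleFn_add_one (p := p) 0

lemma scaleFn_pos_of_pos {x : ℤ} (hx : 0 < x) : 0 < scaleFn p x := by
  have h := scaleFn_add_one (p := p) (x - 1)
  rw [sub_add_cancel] at h
  linarith [scaleFn_mono (p := p) (by omega : 0 ≤ x - 1), scaleFn_zero (p := p),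
    exp_pos (pot p (x - 1))]

lemma exp_pot_le_scaleFn_add_one {x : ℤ} (hx : 0 ≤ x) : exp (pot p x) ≤ scaleFn p (x + 1) := by
  rw [scaleFn_add_one]
  linarith [scaleFn_mono (p := p) hx, scaleFn_zero (p := p)]

lemma scaleFn_harmonic (hp : ∀ j, p j ∈ Set.Ioo 0 1) {x : ℤ} (hx : 1 ≤ x) :
    p x * scaleFn p (x + 1) + (1 - p x) * scaleFn p (x - 1) = scaleFn p x := by
  have hdown := scaleFn_add_one (p := p) (x - 1)
  rw [sub_add_cancel] at hdown
  linear_combination p x * scaleFn_add_one x - (1 - p x) * hdown + balance hp hx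

lemma max_scaleFn_drift_le (hp : ∀ j, p j ∈ Set.Ioo 0 1) (x : ℤ) :
    p x * max (scaleFn p (x + 1)) 0 + (1 - p x) * max (scaleFn p (x - 1)) 0
      ≤ max (scaleFn p x) 0 + 1 := by
  have hnonpos : ∀ {y : ℤ}, y ≤ 0 → max (scaleFn p y) 0 = 0 := fun hy =>
    max_eq_right (scaleFn_zero (p := p) ▸ scaleFn_mono hy)
  have hnonneg : ∀ {y : ℤ}, 0 ≤ y → max (scaleFn p y) 0 = scaleFn p y := fun hy =>
    max_eq_left (scaleFn_zero (p := p) ▸ scaleFn_mono hy)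
  rcases lt_trichotomy x 0 with hx | rfl | hx
  · rw [hnonpos (by omega), hnonpos (by omega), hnonpos hx.le]
    norm_num
  · rw [zero_add, hnonneg zero_le_one, scaleFn_one, hnonpos (by norm_num), hnonpos le_rfl]
    linarith [(hp 0).2]
  · rw [hnonneg (by omega), hnonneg (by omega), hnonneg (by omega), scaleFn_harmonic hp hx]
    linarith

noncomputable def escapeBound (p : ℤ → ℝ) (N n : ℕ) (x : ℤ) : ℝ :=
  (n + max (scaleFn p x) 0) / scaleFn p (N + 1)

lemma escapeBound_nonneg (N n : ℕ) (x : ℤ) : 0 ≤ escapeBound p N n x :=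
  div_nonneg (by positivity) (scaleFn_pos_of_pos (by omega)).le

lemma one_le_escapeBound {N : ℕ} (n : ℕ) {x : ℤ} (hx : (N : ℤ) < x) :
    1 ≤ escapeBound p N n x := by
  rw [escapeBound, le_div_iff₀ (scaleFn_pos_of_pos (by omega)), one_mul]
  linarith [(scaleFn_mono (p := p) (Int.add_one_le_iff.2 hx)).trans (le_max_left _ 0),
    n.cast_nonneg (α := ℝ)]

lemma escapeBound_step (hp : ∀ j, p j ∈ Set.Ioo 0 1) (N n : ℕ) (x : ℤ) :
    p x * escapeBound p N n (x + 1) + (1 - p x) * escapeBound p N n (x - 1)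
      ≤ escapeBound p N (n + 1) x := by
  have := max_scaleFn_drift_le hp x
  calc _ = (n + (p x * max (scaleFn p (x + 1)) 0 + (1 - p x) * max (scaleFn p (x - 1)) 0))
        / scaleFn p (N + 1) := by simp only [escapeBound]; ring
    _ ≤ _ := div_le_div_of_nonneg_right (by push_cast; linarith)
        (scaleFn_pos_of_pos (by omega)).le

end Scale

def pathCylinder {Ω : Type*} (Z : ℕ → Ω → ℤ) (t : ℕ) (z : ℕ → ℤ) : Set Ω :=
  {ω | ∀ s ≤ t, Z s ω = z s}

lemma pathCylinder_succ_update {Ω : Type*} (Z : ℕ → Ω → ℤ) (t : ℕ) (z : ℕ → ℤ) (v : ℤ) :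
    pathCylinder Z (t + 1) (Function.update z (t + 1) v)
      = pathCylinder Z t z ∩ {ω | Z (t + 1) ω = v} := by
  ext ω
  simp only [pathCylinder, Set.mem_ofPred_eq, Set.mem_inter_iff, Nat.le_succ_iff, or_imp,
    forall_and, forall_eq, Function.update_self]
  refine and_congr_left' (forall₂_congr fun s hs => ?_)
  rw [Function.update_of_ne (by omega)]

lemma pathCylinder_inter_hit_succ_subset {Ω : Type*} (Z : ℕ → Ω → ℤ) {A : Set ℤ} {t : ℕ}
    {z : ℕ → ℤ} (hA : z t ∉ A) (n : ℕ) :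
    pathCylinder Z t z ∩ {ω | ∃ s, t ≤ s ∧ s ≤ t + (n + 1) ∧ Z s ω ∈ A}
      ⊆ (pathCylinder Z (t + 1) (Function.update z (t + 1) (z t + 1))
            ∩ {ω | ∃ s, t + 1 ≤ s ∧ s ≤ t + 1 + n ∧ Z s ω ∈ A})
        ∪ (pathCylinder Z (t + 1) (Function.update z (t + 1) (z t - 1))
            ∩ {ω | ∃ s, t + 1 ≤ s ∧ s ≤ t + 1 + n ∧ Z s ω ∈ A})
        ∪ (pathCylinder Z t z ∩ {ω | Z (t + 1) ω ≠ z t + 1 ∧ Z (t + 1) ω ≠ z t - 1}) := by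
  rintro ω ⟨hω, s, hts, hst, hs⟩
  have hts' : t + 1 ≤ s := by
    by_contra
    obtain rfl : s = t := by omega
    exact hA (hω s le_rfl ▸ hs)
  have hhit : ω ∈ {ω | ∃ s, t + 1 ≤ s ∧ s ≤ t + 1 + n ∧ Z s ω ∈ A} := ⟨s, hts', by omega, hs⟩
  simp only [pathCylinder_succ_update, Set.mem_union, Set.mem_inter_iff]
  by_cases hup : Z (t + 1) ω = z t + 1
  · exact .inl (.inl ⟨⟨hω, hup⟩, hhit⟩)
  by_cases hdown : Z (t + 1) ω = z t - 1
  · exact .inl (.inr ⟨⟨hω, hdown⟩, hhit⟩)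
  exact .inr ⟨hω, hup, hdown⟩

namespace IsNNWalk

variable {Ω : Type*} [MeasurableSpace Ω] {P : Measure Ω} {p : ℤ → ℝ} {Z : ℕ → Ω → ℤ} {z0 : ℤ}

lemma measurableSet_pathCylinder (hZ : IsNNWalk P p Z z0) (t : ℕ) (z : ℕ → ℤ) :
    MeasurableSet (pathCylinder Z t z) := by
  have : pathCylinder Z t z = ⋂ s ∈ Set.Iic t, Z s ⁻¹' {z s} := by
    ext; simp [pathCylinder]
  rw [this]
  exact .biInter (Set.to_countable _) fun s _ => hZ.meas s (measurableSet_singleton _)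

lemma measure_pathCylinder_up (hZ : IsNNWalk P p Z z0) (t : ℕ) (z : ℕ → ℤ) :
    P (pathCylinder Z (t + 1) (Function.update z (t + 1) (z t + 1)))
      = ENNReal.ofReal (p (z t)) * P (pathCylinder Z t z) := by
  rw [pathCylinder_succ_update]
  exact hZ.stepUp t z

lemma measure_pathCylinder_down (hZ : IsNNWalk P p Z z0) (t : ℕ) (z : ℕ → ℤ) :
    P (pathCylinder Z (t + 1) (Function.update z (t + 1) (z t - 1)))
      = ENNReal.ofReal (1 - p (z t)) * P (pathCylinder Z t z) := by
  rw [pathCylinder_succ_update]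
  exact hZ.stepDown t z

lemma measure_pathCylinder_inter_not_step [IsFiniteMeasure P] (hZ : IsNNWalk P p Z z0)
    (hp : ∀ j, p j ∈ Set.Icc 0 1) (t : ℕ) (z : ℕ → ℤ) :
    P (pathCylinder Z t z ∩ {ω | Z (t + 1) ω ≠ z t + 1 ∧ Z (t + 1) ω ≠ z t - 1}) = 0 := by
  set C := pathCylinder Z t z
  set U := C ∩ {ω | Z (t + 1) ω = z t + 1}
  set D := C ∩ {ω | Z (t + 1) ω = z t - 1}
  have hmeas : ∀ v, MeasurableSet (C ∩ {ω | Z (t + 1) ω = v}) := fun v =>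
    (hZ.measurableSet_pathCylinder t z).inter (hZ.meas (t + 1) (measurableSet_singleton v))
  have hUD : P (U ∪ D) = P C := by
    rw [measure_union _ (hmeas _), show P U = _ from hZ.stepUp t z,
      show P D = _ from hZ.stepDown t z, ← add_mul,
      ← ENNReal.ofReal_add (hp _).1 (sub_nonneg.2 (hp _).2), add_sub_cancel, ENNReal.ofReal_one,
      one_mul]
    · rfl
    rw [Set.disjoint_iff]
    rintro ω ⟨⟨_, hup⟩, ⟨_, hdown⟩⟩
    simp only [Set.mem_ofPred_eq] at hup hdown
    omega
  have hdiff : P (C \ (U ∪ D)) = 0 := by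
    rw [measure_sdiff (Set.union_subset Set.inter_subset_left Set.inter_subset_left)
      ((hmeas _).union (hmeas _)).nullMeasurableSet (measure_ne_top P _), hUD, tsub_self]
  refine measure_mono_null ?_ hdiff
  rintro ω ⟨hC, hup, hdown⟩
  refine ⟨hC, ?_⟩
  rintro (h | h)
  exacts [hup h.2, hdown h.2]

theorem measure_pathCylinder_inter_hit_le [IsFiniteMeasure P] (hZ : IsNNWalk P p Z z0)
    (hp : ∀ j, p j ∈ Set.Icc 0 1) {A : Set ℤ} {V : ℕ → ℤ → ℝ} (hV_nonneg : ∀ n x, 0 ≤ V n x)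
    (hV_mem : ∀ n, ∀ x ∈ A, 1 ≤ V n x)
    (hV_step : ∀ n, ∀ x ∉ A, p x * V n (x + 1) + (1 - p x) * V n (x - 1) ≤ V (n + 1) x)
    (n t : ℕ) (z : ℕ → ℤ) :
    P (pathCylinder Z t z ∩ {ω | ∃ s, t ≤ s ∧ s ≤ t + n ∧ Z s ω ∈ A})
      ≤ ENNReal.ofReal (V n (z t)) * P (pathCylinder Z t z) := by
  have hmem : ∀ n t z, z t ∈ A →
      P (pathCylinder Z t z ∩ {ω | ∃ s, t ≤ s ∧ s ≤ t + n ∧ Z s ω ∈ A})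
      ≤ ENNReal.ofReal (V n (z t)) * P (pathCylinder Z t z) := fun n t z hA =>
    (measure_mono Set.inter_subset_left).trans
      (le_mul_of_one_le_left' (ENNReal.one_le_ofReal.2 (hV_mem n _ hA)))
  induction n generalizing t z with
  | zero =>
    by_cases hA : z t ∈ A
    · exact hmem 0 t z hA
    refine (measure_mono_null ?_ measure_empty).trans_le zero_le
    rintro ω ⟨hω, s, hts, hst, hs⟩
    obtain rfl : s = t := by omega
    exact hA (hω s le_rfl ▸ hs)
  | succ n ih =>
    by_cases hA : z t ∈ A
    · exact hmem (n + 1) t z hA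
    set C := pathCylinder Z t z
    have hcover := pathCylinder_inter_hit_succ_subset Z hA n
    have hup := ih (t + 1) (Function.update z (t + 1) (z t + 1))
    have hdown := ih (t + 1) (Function.update z (t + 1) (z t - 1))
    rw [hZ.measure_pathCylinder_up, Function.update_self] at hup
    rw [hZ.measure_pathCylinder_down, Function.update_self] at hdown
    obtain ⟨hp0, hp1⟩ := hp (z t)
    calc P (C ∩ _)
        ≤ ENNReal.ofReal (V n (z t + 1)) * (ENNReal.ofReal (p (z t)) * P C)
          + ENNReal.ofReal (V n (z t - 1)) * (ENNReal.ofReal (1 - p (z t)) * P C) + 0 := by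
          refine (measure_mono hcover).trans ((measure_union_le _ _).trans ?_)
          gcongr
          · exact (measure_union_le _ _).trans (add_le_add hup hdown)
          · exact (hZ.measure_pathCylinder_inter_not_step hp t z).le
      _ = ENNReal.ofReal (p (z t) * V n (z t + 1) + (1 - p (z t)) * V n (z t - 1)) * P C := by
          rw [add_zero, ENNReal.ofReal_add (mul_nonneg hp0 (hV_nonneg _ _))
            (mul_nonneg (by linarith) (hV_nonneg _ _)), ENNReal.ofReal_mul hp0,
            ENNReal.ofReal_mul (by linarith)]
          ring
      _ ≤ ENNReal.ofReal (V (n + 1) (z t)) * P C := by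
          gcongr
          exact hV_step n _ hA

theorem measure_hit_le [IsProbabilityMeasure P] (hZ : IsNNWalk P p Z z0)
    (hp : ∀ j, p j ∈ Set.Icc 0 1) {A : Set ℤ} {V : ℕ → ℤ → ℝ} (hV_nonneg : ∀ n x, 0 ≤ V n x)
    (hV_mem : ∀ n, ∀ x ∈ A, 1 ≤ V n x)
    (hV_step : ∀ n, ∀ x ∉ A, p x * V n (x + 1) + (1 - p x) * V n (x - 1) ≤ V (n + 1) x)
    (n : ℕ) : P {ω | ∃ s ≤ n, Z s ω ∈ A} ≤ ENNReal.ofReal (V n z0) := by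
  have hinit : P (pathCylinder Z 0 fun _ => z0)ᶜ = 0 := by
    simpa [pathCylinder, ← Set.compl_ofPred] using ae_iff.1 hZ.init
  calc P {ω | ∃ s ≤ n, Z s ω ∈ A}
      = P ((pathCylinder Z 0 fun _ => z0) ∩ {ω | ∃ s, 0 ≤ s ∧ s ≤ 0 + n ∧ Z s ω ∈ A}) := by
        rw [Set.inter_comm, measure_inter_conull hinit]
        simp
    _ ≤ ENNReal.ofReal (V n z0) * P (pathCylinder Z 0 fun _ => z0) :=
        hZ.measure_pathCylinder_inter_hit_le hp hV_nonneg hV_mem hV_step n 0 _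
    _ ≤ ENNReal.ofReal (V n z0) := mul_le_of_le_one_right' prob_le_one

end IsNNWalk

theorem walk_no_escape_right_general (ε₀ : ℝ) (hε₀ : 0 < ε₀)
    (p : ℤ → ℝ) (hp : ∀ j, p j ∈ Set.Icc ε₀ (1 - ε₀))
    {Ω : Type*} [MeasurableSpace Ω] (P : Measure Ω) [IsProbabilityMeasure P]
    (Z : ℕ → Ω → ℤ) (hZ : IsNNWalk P p Z 0)
    (N : ℕ) (hN : Real.sqrt N < pot p N) :
    P {ω | ∃ t : ℕ, (t : ℝ) ≤ Real.exp (Real.sqrt N / 2) ∧ (N : ℤ) < Z t ω}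
      < ENNReal.ofReal (Real.exp (-Real.sqrt N / 2)) := by
  have hp_Ioo : ∀ j, p j ∈ Set.Ioo 0 1 := fun j =>
    ⟨hε₀.trans_le (hp j).1, (hp j).2.trans_lt (by linarith)⟩
  set T := ⌊exp (√N / 2)⌋₊
  have hc : exp (pot p N) ≤ scaleFn p (N + 1) := exp_pot_le_scaleFn_add_one N.cast_nonneg
  have hc_pos : 0 < scaleFn p (N + 1) := (exp_pos _).trans_le hc
  calc P {ω | ∃ t : ℕ, (t : ℝ) ≤ exp (√N / 2) ∧ (N : ℤ) < Z t ω}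
      = P {ω | ∃ s ≤ T, Z s ω ∈ Set.Ioi (N : ℤ)} := by
        simp only [T, Nat.le_floor_iff (exp_pos _).le, Set.mem_Ioi]
    _ ≤ ENNReal.ofReal (escapeBound p N T 0) :=
        hZ.measure_hit_le (fun j => Set.Ioo_subset_Icc_self (hp_Ioo j)) (escapeBound_nonneg N)
          (fun n _ => one_le_escapeBound n) (fun n x _ => escapeBound_step hp_Ioo N n x) T
    _ < ENNReal.ofReal (exp (-√N / 2)) := by
        rw [ENNReal.ofReal_lt_ofReal_iff (exp_pos _), escapeBound, scaleFn_zero, max_self,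
          add_zero, div_lt_iff₀ hc_pos]
        calc (T : ℝ) ≤ exp (√N / 2) := Nat.floor_le (exp_pos _).le
          _ = exp (-√N / 2) * exp √N := by rw [← exp_add]; ring_nf
          _ < exp (-√N / 2) * exp (pot p N) := by gcongr
          _ ≤ exp (-√N / 2) * scaleFn p (N + 1) := by gcongr

/-- If `Σ(N) > √N`, then for `T = exp(√N/2)` the walk started at `0` satisfies
`P(max_{t ≤ T} Z_t > N) < exp(-√N/2)`. -/
theorem walk_no_escape_right (ε₀ : ℝ) (hε₀ : 0 < ε₀) (hε₀' : ε₀ < 1/2)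
    (p : ℤ → ℝ) (hp : ∀ j, p j ∈ Set.Icc ε₀ (1 - ε₀))
    {Ω : Type*} [MeasurableSpace Ω] (P : Measure Ω) [IsProbabilityMeasure P]
    (Z : ℕ → Ω → ℤ) (hZ : IsNNWalk P p Z 0)
    (N : ℕ) (hN : Real.sqrt N < pot p N) :
    P {ω | ∃ t : ℕ, (t : ℝ) ≤ Real.exp (Real.sqrt N / 2) ∧ (N : ℤ) < Z t ω}
      < ENNReal.ofReal (Real.exp (-Real.sqrt N / 2)) :=
  walk_no_escape_right_general ε₀ hε₀ p hp P Z hZ N hN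
end

section
/- Let α be irrational and 𝔭 ∈ C^∞(𝕋,(0,1)) with ∫ ln 𝔭 ≠ ∫ ln(1-𝔭). Then 𝔭 can be approximated arbitrarily well in the C^∞ topology by functions 𝔭̄ ∈ C^∞(𝕋,(0,1)) for which there exist a nonzero constant c and ψ ∈ C^∞(𝕋, ℝ) with ln(1-𝔭̄(x)) - ln 𝔭̄(x) = c + ψ(x+α) - ψ(x) for all x. -/
/-!
Write `f = ln (1 - 𝔭) - ln 𝔭 = c + h` with `c = ∫ f ≠ 0` and `∫ h = 0`, and let
`r_N = N⁻¹ ∑_{k < N} h (· + k α)` be the Birkhoff averages of `h` under `x ↦ x + α`.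
Then `h - r_N` is the coboundary `ψ (· + α) - ψ` of `ψ = -N⁻¹ ∑_{j < N} ∑_{k < j} h (· + k α)`,
so `𝔭̄ = σ (-(f - r_N))`, with `σ` the logistic function, satisfies
`ln (1 - 𝔭̄) - ln 𝔭̄ = c + ψ (· + α) - ψ`.

Since `α` is irrational, `r_N → 0` uniformly (Weyl): the characters `e_m`, `m ≠ 0`, are
eigenfunctions of the rotation with eigenvalue `≠ 1`, so their averages tend to `0`, and the
functions whose averages converge uniformly to their mean form a closed subspace, which therefore
contains the closure of the trigonometric polynomials. The derivatives of `h` have mean zero and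
commute with averaging, so `r_N → 0` in every `C^n`, and hence `𝔭̄ → 𝔭` in `C^n` because
composition with the smooth function `σ ∘ neg` is continuous in the `C^n` topology.
-/

open Function Set Filter Topology MeasureTheory
open scoped ContDiff

local notation "𝕋" => AddCircle (1 : ℝ)

section

variable {G : Type*} [TopologicalSpace G] [AddMonoid G] [ContinuousAdd G]

def compAddRight {E : Type*} [TopologicalSpace E] (a : G) (F : C(G, E)) : C(G, E) :=
  F.comp (ContinuousMap.addRight a)

lemma compAddRight_iterate_apply {E : Type*} [TopologicalSpace E] (a : G) (k : ℕ) (F : C(G, E))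
    (x : G) : (compAddRight a)^[k] F x = F (x + k • a) := by
  induction k generalizing F with
  | zero => simp
  | succ k ih => rw [iterate_succ_apply, ih, succ_nsmul, ← add_assoc]; rfl

lemma birkhoffAverage_compAddRight_apply {𝕜 E : Type*} [DivisionSemiring 𝕜] [TopologicalSpace E]
    [AddCommMonoid E] [Module 𝕜 E] [ContinuousAdd E] [ContinuousConstSMul 𝕜 E] (a : G)
    (F : C(G, E)) (N : ℕ) (x : G) :
    birkhoffAverage 𝕜 (compAddRight a) id N F x = birkhoffAverage 𝕜 (· + a) F N x := by
  simp [birkhoffAverage, birkhoffSum, compAddRight_iterate_apply]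

lemma lipschitzWith_compAddRight {E : Type*} [PseudoMetricSpace E] [CompactSpace G] (a : G) :
    LipschitzWith 1 (compAddRight (E := E) a) :=
  LipschitzWith.of_dist_le_mul fun F F' => by
    rw [NNReal.coe_one, one_mul, ContinuousMap.dist_le dist_nonneg]
    exact fun x => ContinuousMap.dist_apply_le_dist (x + a)

end

lemma norm_fourierCoeff_le (F : C(𝕋, ℂ)) (n : ℤ) : ‖fourierCoeff F n‖ ≤ ‖F‖ := by
  simpa [fourierCoeff] using norm_integral_le_of_norm_le_const (μ := AddCircle.haarAddCircle)
    (f := fun t => fourier (-n) t • F t)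
    (.of_forall fun t => by simpa [fourier_apply, Circle.norm_coe] using F.norm_coe_le_norm t)

lemma lipschitzWith_fourierCoeff (n : ℤ) : LipschitzWith 1 fun F : C(𝕋, ℂ) => fourierCoeff F n :=
  LipschitzWith.of_dist_le_mul fun F F' => by
    have := congrFun (fourierCoeff.add
      ((F - F').continuous.integrable_of_hasCompactSupport (.of_compactSpace _))
      (F'.continuous.integrable_of_hasCompactSupport (.of_compactSpace _))) n
    rw [ContinuousMap.coe_sub, sub_add_cancel, Pi.add_apply] at this
    rw [NNReal.coe_one, one_mul, dist_eq_norm, dist_eq_norm, this, add_sub_cancel_right]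
    exact norm_fourierCoeff_le (F - F') n

lemma tendsto_inv_mul_geom_sum {𝕜 : Type*} [RCLike 𝕜] {z : 𝕜} (hz : ‖z‖ = 1) (hz1 : z ≠ 1) :
    Tendsto (fun N : ℕ => (N : 𝕜)⁻¹ * ∑ k ∈ Finset.range N, z ^ k) atTop (𝓝 0) := by
  have hbound : ∀ N : ℕ, ‖∑ k ∈ Finset.range N, z ^ k‖ ≤ 2 / ‖z - 1‖ := fun N => by
    rw [geom_sum_eq hz1, norm_div]
    gcongr
    calc ‖z ^ N - 1‖ ≤ ‖z ^ N‖ + ‖(1 : 𝕜)‖ := norm_sub_le _ _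
      _ = 2 := by rw [norm_pow, hz]; norm_num
  refine squeeze_zero_norm (fun N => ?_) (tendsto_const_div_atTop_nhds_zero_nat (2 / ‖z - 1‖))
  rw [norm_mul, norm_inv, RCLike.norm_natCast, ← div_eq_inv_mul]
  gcongr
  exact hbound N

lemma fourier_coe_ne_one {α : ℝ} (hα : Irrational α) {m : ℤ} (hm : m ≠ 0) :
    fourier m (α : 𝕋) ≠ 1 := by
  rw [fourier_apply, Ne, ← Circle.coe_one, Circle.coe_inj, ← AddCircle.toCircle_zero,
    (AddCircle.injective_toCircle one_ne_zero).eq_iff, ← AddCircle.coe_zsmul,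
    AddCircle.coe_eq_zero_iff]
  rintro ⟨k, hk⟩
  exact (hα.intCast_mul hm).ne_int k (by simpa using hk.symm)

lemma fourier_add_nsmul (m : ℤ) (x a : 𝕋) (k : ℕ) :
    fourier m (x + k • a) = fourier m a ^ k * fourier m x := by
  rw [fourier_apply, fourier_apply, smul_add, AddCircle.toCircle_add, smul_comm,
    AddCircle.toCircle_nsmul, mul_comm]
  push_cast
  rfl

def tendstoMeanSubmodule (a : 𝕋) : Submodule ℂ C(𝕋, ℂ) where
  carrier := {F | Tendsto (birkhoffAverage ℂ (compAddRight a) id · F) atTop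
    (𝓝 (.const 𝕋 (fourierCoeff F 0)))}
  add_mem' {F F'} hF hF' := by
    have hsplit : ∀ N, birkhoffAverage ℂ (compAddRight a) id N (F + F') =
        birkhoffAverage ℂ (compAddRight a) id N F +
          birkhoffAverage ℂ (compAddRight a) id N F' := fun N => by
      ext x
      rw [ContinuousMap.add_apply, birkhoffAverage_compAddRight_apply,
        birkhoffAverage_compAddRight_apply, birkhoffAverage_compAddRight_apply,
        ContinuousMap.coe_add, birkhoffAverage_add]
      rfl
    simp only [mem_ofPred_eq, hsplit, ContinuousMap.coe_add,
      fourierCoeff.add (F.continuous.integrable_of_hasCompactSupport (.of_compactSpace _))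
        (F'.continuous.integrable_of_hasCompactSupport (.of_compactSpace _)), Pi.add_apply]
    exact hF.add hF'
  zero_mem' := by
    have hzero : ∀ N, birkhoffAverage ℂ (compAddRight a) id N (0 : C(𝕋, ℂ)) = 0 := fun N => by
      ext x
      rw [birkhoffAverage_compAddRight_apply]
      simp [birkhoffAverage, birkhoffSum]
    simp [hzero, fourierCoeff]
  smul_mem' c F hF := by
    have hscale : ∀ N, birkhoffAverage ℂ (compAddRight a) id N (c • F) =
        c • birkhoffAverage ℂ (compAddRight a) id N F := fun N => by
      ext x
      rw [ContinuousMap.smul_apply, birkhoffAverage_compAddRight_apply,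
        birkhoffAverage_compAddRight_apply]
      simp [birkhoffAverage, birkhoffSum, Finset.mul_sum, mul_left_comm]
    simp only [mem_ofPred_eq, hscale, ContinuousMap.coe_smul, fourierCoeff.const_smul]
    convert hF.const_smul c using 2
    ext
    simp

lemma fourier_mem_tendstoMeanSubmodule {α : ℝ} (hα : Irrational α) (m : ℤ) :
    fourier m ∈ tendstoMeanSubmodule (α : 𝕋) := by
  show Tendsto _ _ _
  rw [fourierCoeff_fourier]
  rcases eq_or_ne m 0 with rfl | hm
  · have hone : fourier 0 = ContinuousMap.const 𝕋 (1 : ℂ) := by ext; simp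
    have hfix : IsFixedPt (compAddRight (α : 𝕋)) (fourier 0) := by ext; simp [compAddRight, hone]
    simpa [← hone] using hfix.tendsto_birkhoffAverage ℂ id
  · have heigen : ∀ N, birkhoffAverage ℂ (compAddRight (α : 𝕋)) id N (fourier m) =
        ((N : ℂ)⁻¹ * ∑ k ∈ Finset.range N, fourier m (α : 𝕋) ^ k) • fourier m := fun N => by
      ext x
      rw [birkhoffAverage_compAddRight_apply]
      simp only [birkhoffAverage, birkhoffSum, add_right_iterate_apply, fourier_add_nsmul,
        ContinuousMap.smul_apply, smul_eq_mul, Finset.mul_sum, Finset.sum_mul, mul_assoc]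
    rw [funext heigen, Pi.single_eq_of_ne hm.symm]
    convert (tendsto_inv_mul_geom_sum (by rw [fourier_apply, Circle.norm_coe])
      (fourier_coe_ne_one hα hm)).smul_const (fourier m) using 2
    ext
    simp

theorem tendsto_birkhoffAverage_compAddRight {α : ℝ} (hα : Irrational α) (F : C(𝕋, ℂ)) :
    Tendsto (birkhoffAverage ℂ (compAddRight (α : 𝕋)) id · F) atTop
      (𝓝 (.const 𝕋 (fourierCoeff F 0))) := by
  have hclosed : IsClosed (tendstoMeanSubmodule (α : 𝕋) : Set C(𝕋, ℂ)) :=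
    isClosed_setOfPred_tendsto_birkhoffAverage ℂ (lipschitzWith_compAddRight _) uniformContinuous_id
      (ContinuousMap.continuous_const'.comp (lipschitzWith_fourierCoeff 0).continuous)
  have hspan : Submodule.span ℂ (range fourier) ≤ tendstoMeanSubmodule (α : 𝕋) :=
    Submodule.span_le.2 (range_subset_iff.2 (fourier_mem_tendstoMeanSubmodule hα))
  have htop := Submodule.topologicalClosure_minimal _ hspan hclosed
  rw [span_fourier_closure_eq_top] at htop
  exact htop Submodule.mem_top

theorem tendstoUniformly_birkhoffAverage_add {α : ℝ} (hα : Irrational α) {u : ℝ → ℝ}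
    (hu : Continuous u) (hper : Periodic u 1) (hmean : ∫ x in (0 : ℝ)..1, u x = 0) :
    TendstoUniformly (birkhoffAverage ℝ (· + α) u) 0 atTop := by
  have hperC : Periodic (fun x => (u x : ℂ)) 1 := fun x => by simp [hper x]
  let F : C(𝕋, ℂ) := ⟨hperC.lift, (Complex.continuous_ofReal.comp hu).quotient_liftOn' _⟩
  have hF : ∀ x : ℝ, F x = u x := fun x => hperC.lift_coe x
  have hF0 : fourierCoeff F 0 = 0 := by
    rw [fourierCoeff_eq_intervalIntegral _ _ 0]
    simp [hF, intervalIntegral.integral_ofReal, hmean]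
  have hlim := tendsto_birkhoffAverage_compAddRight hα F
  rw [hF0, ContinuousMap.tendsto_iff_tendstoUniformly, Metric.tendstoUniformly_iff] at hlim
  rw [Metric.tendstoUniformly_iff]
  intro ε hε
  filter_upwards [hlim ε hε] with N hN x
  have hcoe : birkhoffAverage ℂ (compAddRight (α : 𝕋)) id N F x =
      ((birkhoffAverage ℝ (· + α) u N x : ℝ) : ℂ) := by
    rw [birkhoffAverage_compAddRight_apply]
    simp [birkhoffAverage, birkhoffSum, add_right_iterate_apply, ← hF]
  simpa [hcoe, Complex.dist_eq] using hN x

def IteratedDerivLE (m : ℕ) (f : ℝ → ℝ) (K : ℝ) : Prop :=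
  ∀ j ≤ m, ∀ x, |iteratedDeriv j f x| ≤ K

namespace IteratedDerivLE

variable {m : ℕ} {f g : ℝ → ℝ} {A B : ℝ}

lemma nonneg (h : IteratedDerivLE m f A) : 0 ≤ A :=
  (abs_nonneg _).trans (h 0 m.zero_le 0)

lemma mono {m' : ℕ} {A' : ℝ} (h : IteratedDerivLE m f A) (hm : m' ≤ m) (hA : A ≤ A') :
    IteratedDerivLE m' f A' :=
  fun j hj x => (h j (hj.trans hm) x).trans hA

lemma zero_iff : IteratedDerivLE 0 f A ↔ ∀ x, |f x| ≤ A := by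
  simp [IteratedDerivLE]

lemma succ_iff :
    IteratedDerivLE (m + 1) f A ↔ (∀ x, |f x| ≤ A) ∧ IteratedDerivLE m (deriv f) A := by
  refine ⟨fun h => ⟨fun x => by simpa using h 0 (Nat.zero_le _) x, fun j hj x => ?_⟩,
    fun ⟨h0, h⟩ j hj x => ?_⟩
  · simpa [iteratedDeriv_succ'] using h (j + 1) (by omega) x
  · rcases j with _ | j
    · simpa using h0 x
    · simpa [iteratedDeriv_succ'] using h j (by omega) x

lemma add (hf : ContDiff ℝ m f) (hg : ContDiff ℝ m g) (hfA : IteratedDerivLE m f A)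
    (hgB : IteratedDerivLE m g B) : IteratedDerivLE m (f + g) (A + B) := fun j hj x => by
  rw [iteratedDeriv_add ((hf.of_le (by exact_mod_cast hj)).contDiffAt)
    ((hg.of_le (by exact_mod_cast hj)).contDiffAt)]
  exact (abs_add_le _ _).trans (add_le_add (hfA j hj x) (hgB j hj x))

lemma sub (hf : ContDiff ℝ m f) (hg : ContDiff ℝ m g) (hfA : IteratedDerivLE m f A)
    (hgB : IteratedDerivLE m g B) : IteratedDerivLE m (f - g) (A + B) := fun j hj x => by
  rw [iteratedDeriv_sub ((hf.of_le (by exact_mod_cast hj)).contDiffAt)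
    ((hg.of_le (by exact_mod_cast hj)).contDiffAt)]
  exact (abs_sub _ _).trans (add_le_add (hfA j hj x) (hgB j hj x))

lemma mul (hf : ContDiff ℝ m f) (hg : ContDiff ℝ m g) (hfA : IteratedDerivLE m f A)
    (hgB : IteratedDerivLE m g B) : IteratedDerivLE m (f * g) (2 ^ m * (A * B)) := fun j hj x => by
  rw [iteratedDeriv_mul ((hf.of_le (by exact_mod_cast hj)).contDiffAt)
    ((hg.of_le (by exact_mod_cast hj)).contDiffAt)]
  calc |∑ i ∈ Finset.range (j + 1),
          (j.choose i : ℝ) * iteratedDeriv i f x * iteratedDeriv (j - i) g x|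
      ≤ ∑ i ∈ Finset.range (j + 1), (j.choose i : ℝ) * (A * B) := by
        refine (Finset.abs_sum_le_sum_abs _ _).trans (Finset.sum_le_sum fun i hi => ?_)
        have hij : i ≤ j := Nat.lt_succ_iff.mp (Finset.mem_range.mp hi)
        rw [abs_mul, abs_mul, Nat.abs_cast, mul_assoc]
        refine mul_le_mul_of_nonneg_left ?_ (Nat.cast_nonneg _)
        exact mul_le_mul (hfA i (hij.trans hj) x) (hgB _ ((j.sub_le i).trans hj) x) (abs_nonneg _)
          hfA.nonneg
    _ = 2 ^ j * (A * B) := by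
        rw [← Finset.sum_mul]
        exact_mod_cast congrArg (fun n : ℕ => (n : ℝ) * (A * B)) (Nat.sum_range_choose j)
    _ ≤ 2 ^ m * (A * B) := by
        gcongr
        · exact mul_nonneg hfA.nonneg hgB.nonneg
        · norm_num

end IteratedDerivLE

open scoped Nat in
lemma exists_iteratedDerivLE_comp {m : ℕ} {Φ : ℝ → ℝ} (hΦ : ContDiff ℝ m Φ) (K : ℝ) :
    ∃ M, ∀ w : ℝ → ℝ, ContDiff ℝ m w → IteratedDerivLE m w K → IteratedDerivLE m (Φ ∘ w) M := by
  obtain ⟨C, hC⟩ : ∃ C, ∀ i ≤ m, ∀ y ∈ Icc (-K) K, ‖iteratedFDeriv ℝ i Φ y‖ ≤ C := by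
    have hcont : Continuous fun y => ∑ i ∈ Finset.range (m + 1), ‖iteratedFDeriv ℝ i Φ y‖ :=
      continuous_finsetSum _ fun i hi => (hΦ.continuous_iteratedFDeriv
        (by exact_mod_cast Nat.lt_succ_iff.mp (Finset.mem_range.mp hi))).norm
    obtain ⟨C, hC⟩ := isCompact_Icc.exists_bound_of_continuousOn hcont.continuousOn
    refine ⟨C, fun i hi y hy => le_trans ?_ ((le_abs_self _).trans (hC y hy))⟩
    exact Finset.single_le_sum (f := fun i => ‖iteratedFDeriv ℝ i Φ y‖)
      (fun _ _ => norm_nonneg _) (Finset.mem_range.2 (Nat.lt_succ_of_le hi))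
  refine ⟨m ! * C * max K 1 ^ m, fun w hw hwK j hj x => ?_⟩
  have hwx : w x ∈ Icc (-K) K := abs_le.1 (by simpa using hwK 0 m.zero_le x)
  rw [← Real.norm_eq_abs, ← norm_iteratedFDeriv_eq_norm_iteratedDeriv]
  calc ‖iteratedFDeriv ℝ j (Φ ∘ w) x‖ ≤ j ! * C * max K 1 ^ j :=
        norm_iteratedFDeriv_comp_le hΦ hw (by exact_mod_cast hj) x
          (fun i hi => hC i (hi.trans hj) _ hwx) fun i hi1 hi => by
            rw [norm_iteratedFDeriv_eq_norm_iteratedDeriv, Real.norm_eq_abs]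
            exact (hwK i (hi.trans hj) x).trans ((le_max_left K 1).trans
              (le_self_pow₀ (le_max_right K 1) (by omega)))
    _ ≤ m ! * C * max K 1 ^ m := by
        have hC0 : 0 ≤ C := (norm_nonneg _).trans (hC 0 m.zero_le _ hwx)
        gcongr
        exact le_max_right K 1

lemma deriv_comp_sub_comp_sub {Φ u r : ℝ → ℝ} (hΦ : Differentiable ℝ Φ) (hu : Differentiable ℝ u)
    (hr : Differentiable ℝ r) :
    deriv (fun x => Φ (u x) - Φ (u x - r x)) =
      (fun x => deriv Φ (u x) - deriv Φ (u x - r x)) * deriv u +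
        deriv r * fun x => deriv Φ (u x - r x) := by
  funext x
  have h₁ := (hΦ (u x)).hasDerivAt.comp x (hu x).hasDerivAt
  have h₂ := (hΦ (u x - r x)).hasDerivAt.comp x ((hu x).hasDerivAt.sub (hr x).hasDerivAt)
  refine (h₁.sub h₂).deriv.trans ?_
  simp only [Pi.add_apply, Pi.mul_apply]
  ring

def TendstoZeroCn {ι : Type*} (m : ℕ) (l : Filter ι) (r : ι → ℝ → ℝ) : Prop :=
  ∀ ε > 0, ∀ᶠ i in l, IteratedDerivLE m (r i) ε

namespace TendstoZeroCn

variable {ι : Type*} {m : ℕ} {l : Filter ι} {r s : ι → ℝ → ℝ}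

lemma mono {m' : ℕ} (h : TendstoZeroCn m l r) (hm : m' ≤ m) : TendstoZeroCn m' l r :=
  fun ε hε => (h ε hε).mono fun _ hi => hi.mono hm le_rfl

lemma succ_iff : TendstoZeroCn (m + 1) l r ↔
    TendstoZeroCn 0 l r ∧ TendstoZeroCn m l fun i => deriv (r i) := by
  simp only [TendstoZeroCn, IteratedDerivLE.succ_iff, IteratedDerivLE.zero_iff, eventually_and]
  exact ⟨fun h => ⟨fun ε hε => (h ε hε).1, fun ε hε => (h ε hε).2⟩,
    fun h ε hε => ⟨h.1 ε hε, h.2 ε hε⟩⟩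

lemma add (hr : ∀ i, ContDiff ℝ m (r i)) (hs : ∀ i, ContDiff ℝ m (s i))
    (h₁ : TendstoZeroCn m l r) (h₂ : TendstoZeroCn m l s) : TendstoZeroCn m l (r + s) :=
  fun ε hε => by
    filter_upwards [h₁ (ε / 2) (half_pos hε), h₂ (ε / 2) (half_pos hε)] with i hri hsi
    exact (hri.add (hr i) (hs i) hsi).mono le_rfl (add_halves ε).le

lemma mul {g : ι → ℝ → ℝ} {B : ℝ} (hr : ∀ i, ContDiff ℝ m (r i)) (hg : ∀ i, ContDiff ℝ m (g i))
    (h : TendstoZeroCn m l r) (hgB : ∀ᶠ i in l, IteratedDerivLE m (g i) B) :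
    TendstoZeroCn m l (r * g) := fun ε hε => by
  have hpos : 0 < 2 ^ m * (|B| + 1) := by positivity
  filter_upwards [h (ε / (2 ^ m * (|B| + 1))) (div_pos hε hpos), hgB] with i hri hgi
  refine (IteratedDerivLE.mul (hr i) (hg i) hri hgi).mono le_rfl ?_
  calc 2 ^ m * (ε / (2 ^ m * (|B| + 1)) * B) ≤ 2 ^ m * (ε / (2 ^ m * (|B| + 1)) * (|B| + 1)) := by
        gcongr
        linarith [le_abs_self B]
    _ = ε := by field_simp

end TendstoZeroCn

lemma TendstoZeroCn.zero_comp_sub {ι : Type*} {l : Filter ι} {Φ u : ℝ → ℝ} {K : ℝ}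
    {r : ι → ℝ → ℝ} (hΦ : ContDiff ℝ 1 Φ) (huK : ∀ x, |u x| ≤ K) (h : TendstoZeroCn 0 l r) :
    TendstoZeroCn 0 l fun i x => Φ (u x) - Φ (u x - r i x) := by
  obtain ⟨L, hL⟩ := hΦ.locallyLipschitz.locallyLipschitzOn
    |>.exists_lipschitzOnWith_of_compact (isCompact_Icc (a := -(K + 1)) (b := K + 1))
  intro ε hε
  filter_upwards [h (min 1 (ε / (L + 1))) (by positivity)] with i hi
  rw [IteratedDerivLE.zero_iff] at hi ⊢
  intro x
  have hux := abs_le.1 (huK x)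
  have hrx := abs_le.1 ((hi x).trans (min_le_left _ _))
  have hlip := hL.dist_le_mul (u x) ⟨by linarith, by linarith⟩ (u x - r i x)
    ⟨by linarith, by linarith⟩
  rw [Real.dist_eq, Real.dist_eq, sub_sub_cancel] at hlip
  calc |Φ (u x) - Φ (u x - r i x)| ≤ L * |r i x| := hlip
    _ ≤ (L + 1) * (ε / (L + 1)) :=
        mul_le_mul (by linarith) ((hi x).trans (min_le_right _ _)) (abs_nonneg _) (by positivity)
    _ = ε := by field_simp

theorem TendstoZeroCn.comp_sub {ι : Type*} {l : Filter ι} {m : ℕ} {Φ u : ℝ → ℝ} {K : ℝ}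
    {r : ι → ℝ → ℝ} (hΦ : ContDiff ℝ ∞ Φ) (hu : ContDiff ℝ ∞ u) (hr : ∀ i, ContDiff ℝ ∞ (r i))
    (huK : IteratedDerivLE m u K) (h : TendstoZeroCn m l r) :
    TendstoZeroCn m l fun i x => Φ (u x) - Φ (u x - r i x) := by
  induction m generalizing Φ with
  | zero =>
    exact .zero_comp_sub (hΦ.of_le (by norm_num)) (IteratedDerivLE.zero_iff.1 huK) h
  | succ m ih =>
    have hd : ∀ {f : ℝ → ℝ}, ContDiff ℝ ∞ f → ContDiff ℝ ∞ (deriv f) :=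
      fun hf => (contDiff_infty_iff_deriv.1 hf).2
    have hdiff : ∀ {f : ℝ → ℝ}, ContDiff ℝ ∞ f → Differentiable ℝ f :=
      fun hf => (contDiff_infty_iff_deriv.1 hf).1
    have hsmooth : ∀ {f : ℝ → ℝ}, ContDiff ℝ ∞ f → ContDiff ℝ m f :=
      fun hf => hf.of_le (by exact_mod_cast le_top)
    have hA : ∀ i, ContDiff ℝ ∞ fun x => deriv Φ (u x) - deriv Φ (u x - r i x) :=
      fun i => ((hd hΦ).comp hu).sub ((hd hΦ).comp (hu.sub (hr i)))
    have hB : ∀ i, ContDiff ℝ ∞ fun x => deriv Φ (u x - r i x) :=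
      fun i => (hd hΦ).comp (hu.sub (hr i))
    have hrm := h.mono m.le_succ
    have huK' := huK.mono m.le_succ le_rfl
    obtain ⟨M, hM⟩ := exists_iteratedDerivLE_comp (hsmooth (hd hΦ)) (K + 1)
    have hBM : ∀ᶠ i in l, IteratedDerivLE m (fun x => deriv Φ (u x - r i x)) M := by
      filter_upwards [hrm 1 one_pos] with i hi
      exact hM _ (hsmooth (hu.sub (hr i))) (huK'.sub (hsmooth hu) (hsmooth (hr i)) hi)
    rw [TendstoZeroCn.succ_iff] at h ⊢
    refine ⟨(ih hΦ huK' hrm).mono m.zero_le, ?_⟩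
    -- The first summand is small by induction applied to `deriv Φ`, the second because
    -- `deriv (r i)` is small while `deriv Φ ∘ (u - r i)` stays bounded.
    simp_rw [deriv_comp_sub_comp_sub (hdiff hΦ) (hdiff hu) (hdiff (hr _))]
    refine .add (fun i => (hsmooth (hA i)).mul (hsmooth (hd hu)))
      (fun i => (hsmooth (hd (hr i))).mul (hsmooth (hB i))) ?_ ?_
    · exact (ih (hd hΦ) huK' hrm).mul (fun i => hsmooth (hA i)) (fun _ => hsmooth (hd hu))
        (.of_forall fun _ => (IteratedDerivLE.succ_iff.1 huK).2)
    · exact h.2.mul (fun i => hsmooth (hd (hr i))) (fun i => hsmooth (hB i)) hBM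

section

variable {𝕜 F : Type*} [NontriviallyNormedField 𝕜] [NormedAddCommGroup F] [NormedSpace 𝕜 F]
  {h : 𝕜 → F}

lemma Function.Periodic.iteratedDeriv {c : 𝕜} (hp : Periodic h c) (n : ℕ) :
    Periodic (iteratedDeriv n h) c := fun x => by
  simpa [show (fun z => h (z + c)) = h from funext hp] using
    (congrFun (iteratedDeriv_comp_add_const n h c) x).symm

lemma ContDiff.birkhoffSum_add {n : WithTop ℕ∞} (hh : ContDiff 𝕜 n h) (a : 𝕜) (N : ℕ) :
    ContDiff 𝕜 n (birkhoffSum (· + a) h N) := by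
  unfold birkhoffSum
  simp only [add_right_iterate_apply]
  exact ContDiff.sum fun k _ => hh.comp (contDiff_id.add contDiff_const)

lemma iteratedDeriv_birkhoffSum_add {j : ℕ} (hh : ContDiff 𝕜 j h) (a : 𝕜) (N : ℕ) :
    iteratedDeriv j (birkhoffSum (· + a) h N) = birkhoffSum (· + a) (iteratedDeriv j h) N := by
  funext x
  unfold birkhoffSum
  simp only [add_right_iterate_apply]
  rw [iteratedDeriv_fun_sum (f := fun k y => h (y + k • a))
    fun k _ => (hh.comp (contDiff_id.add contDiff_const)).contDiffAt]
  simp [iteratedDeriv_comp_add_const]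

lemma iteratedDeriv_birkhoffAverage_add {j : ℕ} (hh : ContDiff 𝕜 j h) (a : 𝕜) (N : ℕ) :
    iteratedDeriv j (birkhoffAverage 𝕜 (· + a) h N) =
      birkhoffAverage 𝕜 (· + a) (iteratedDeriv j h) N := by
  funext x
  rw [show birkhoffAverage 𝕜 (· + a) h N = (N : 𝕜)⁻¹ • birkhoffSum (· + a) h N from rfl,
    iteratedDeriv_const_smul (hh.birkhoffSum_add a N).contDiffAt, iteratedDeriv_birkhoffSum_add hh]
  rfl

end

lemma Function.Periodic.birkhoffSum_add {G M : Type*} [AddCommMonoid G] [AddCommMonoid M]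
    {h : G → M} {c : G} (hp : Periodic h c) (a : G) (N : ℕ) :
    Periodic (birkhoffSum (· + a) h N) c := fun x => by
  simp only [birkhoffSum, add_right_iterate_apply, add_right_comm x c, hp _]

theorem sub_birkhoffAverage_eq {R α M : Type*} [DivisionRing R] [AddCommGroup M] [Module R M]
    (f : α → α) (g : α → M) {N : ℕ} (hN : (N : R) ≠ 0) (x : α) :
    g x - birkhoffAverage R f g N x =
      -(N : R)⁻¹ • ∑ j ∈ Finset.range N, birkhoffSum f g j (f x) -
        -(N : R)⁻¹ • ∑ j ∈ Finset.range N, birkhoffSum f g j x := by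
  have htel : ∑ j ∈ Finset.range N, (birkhoffSum f g j (f x) - birkhoffSum f g j x) =
      birkhoffSum f g N x - (N : R) • g x := by
    simp only [birkhoffSum_apply_sub_birkhoffSum, Finset.sum_sub_distrib, Finset.sum_const,
      Finset.card_range, Nat.cast_smul_eq_nsmul]
    rfl
  rw [← smul_sub, ← Finset.sum_sub_distrib, htel, smul_sub, smul_smul, neg_mul,
    inv_mul_cancel₀ hN, birkhoffAverage, neg_smul, neg_smul, one_smul]
  abel

lemma intervalIntegral_iteratedDeriv_eq_zero_of_periodic {h : ℝ → ℝ} {c : ℝ}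
    (hh : ContDiff ℝ ∞ h) (hp : Periodic h c) (hmean : ∫ x in (0 : ℝ)..c, h x = 0) (j : ℕ) :
    ∫ x in (0 : ℝ)..c, iteratedDeriv j h x = 0 := by
  cases j with
  | zero => simpa using hmean
  | succ j =>
    have hj : ContDiff ℝ ∞ (iteratedDeriv j h) := by
      rw [iteratedDeriv_eq_iterate]; exact hh.iterate_deriv j
    rw [iteratedDeriv_succ, intervalIntegral.integral_deriv_eq_sub
      (fun x _ => (contDiff_infty_iff_deriv.1 hj).1 x)
      ((hj.continuous_deriv (by exact_mod_cast le_top)).intervalIntegrable _ _),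
      (hp.iteratedDeriv j).eq, sub_self]

lemma exists_iteratedDerivLE_of_periodic {f : ℝ → ℝ} {c : ℝ} {m : ℕ} (hf : ContDiff ℝ m f)
    (hp : Periodic f c) (hc : c ≠ 0) : ∃ K, IteratedDerivLE m f K := by
  have hbdd : ∀ j ∈ Iic m, ∀ᶠ K in atTop, ∀ x, |iteratedDeriv j f x| ≤ K := fun j hj => by
    obtain ⟨C, hC⟩ := isBounded_iff_forall_norm_le.1 <| (hp.iteratedDeriv j).isBounded_of_continuous
      hc (hf.continuous_iteratedDeriv j (by exact_mod_cast hj))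
    filter_upwards [eventually_ge_atTop C] with K hK x
    have hCx := hC _ (mem_range_self x)
    rw [Real.norm_eq_abs] at hCx
    exact hCx.trans hK
  obtain ⟨K, hK⟩ := ((eventually_all_finite (finite_Iic m)).2 hbdd).exists
  exact ⟨K, fun j hj => hK j hj⟩

theorem tendstoZeroCn_birkhoffAverage_add {α : ℝ} (hα : Irrational α) {h : ℝ → ℝ}
    (hh : ContDiff ℝ ∞ h) (hp : Periodic h 1) (hmean : ∫ x in (0 : ℝ)..1, h x = 0) (m : ℕ) :
    TendstoZeroCn m atTop (birkhoffAverage ℝ (· + α) h) := fun ε hε => by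
  have hj : ∀ j ∈ Iic m, ∀ᶠ N in atTop,
      ∀ x, |iteratedDeriv j (birkhoffAverage ℝ (· + α) h N) x| ≤ ε := fun j _ => by
    have hu := tendstoUniformly_birkhoffAverage_add hα
      (hh.continuous_iteratedDeriv j (by exact_mod_cast le_top)) (hp.iteratedDeriv j)
      (intervalIntegral_iteratedDeriv_eq_zero_of_periodic hh hp hmean j)
    filter_upwards [Metric.tendstoUniformly_iff.1 hu ε hε] with N hN x
    rw [iteratedDeriv_birkhoffAverage_add (hh.of_le (by exact_mod_cast le_top))]
    simpa [Real.dist_eq] using (hN x).le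
  filter_upwards [(eventually_all_finite (finite_Iic m)).2 hj] with N hN j hjm using hN j hjm

lemma exists_coboundary_eq_sub_birkhoffAverage {h : ℝ → ℝ} {c : ℝ} {n : WithTop ℕ∞}
    (hh : ContDiff ℝ n h) (hp : Periodic h c) (a : ℝ) {N : ℕ} (hN : N ≠ 0) :
    ∃ ψ : ℝ → ℝ, ContDiff ℝ n ψ ∧ Periodic ψ c ∧
      ∀ x, h x - birkhoffAverage ℝ (· + a) h N x = ψ (x + a) - ψ x := by
  refine ⟨fun y => -(N : ℝ)⁻¹ • ∑ j ∈ Finset.range N, birkhoffSum (· + a) h j y,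
    (ContDiff.sum fun j _ => hh.birkhoffSum_add a j).const_smul _, fun x => ?_,
    sub_birkhoffAverage_eq _ h (Nat.cast_ne_zero.2 hN)⟩
  simp only [fun j => hp.birkhoffSum_add a j x]

lemma Real.log_one_sub_sigmoid_neg_sub_log (t : ℝ) :
    log (1 - sigmoid (-t)) - log (sigmoid (-t)) = t := by
  rw [sigmoid_neg, sub_sub_cancel, ← sigmoid_neg, ← sigmoid_mul_rexp_neg,
    log_mul (sigmoid_pos t).ne' (exp_pos _).ne', log_exp]
  ring

lemma Real.sigmoid_neg_log_one_sub_sub_log {q : ℝ} (hq : q ∈ Ioo 0 1) :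
    sigmoid (-(log (1 - q) - log q)) = q := by
  have hq0 : q ≠ 0 := hq.1.ne'
  rw [sigmoid_def, neg_neg, exp_sub, exp_log (sub_pos.2 hq.2), exp_log hq.1]
  field_simp
  ring

theorem exists_mean_add_coboundary_near {α : ℝ} (hα : Irrational α) {f : ℝ → ℝ}
    (hf : ContDiff ℝ ∞ f) (hp : Periodic f 1) {Φ : ℝ → ℝ} (hΦ : ContDiff ℝ ∞ Φ) (n : ℕ)
    {ε : ℝ} (hε : 0 < ε) :
    ∃ g ψ : ℝ → ℝ, ContDiff ℝ ∞ g ∧ Periodic g 1 ∧ ContDiff ℝ ∞ ψ ∧ Periodic ψ 1 ∧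
      (∀ x, g x = (∫ y in (0 : ℝ)..1, f y) + ψ (x + α) - ψ x) ∧
      IteratedDerivLE n (fun x => Φ (f x) - Φ (g x)) ε := by
  set c := ∫ y in (0 : ℝ)..1, f y
  have hh : ContDiff ℝ ∞ fun x => f x - c := hf.sub contDiff_const
  have hhper : Periodic (fun x => f x - c) 1 := fun x => by simp only [hp x]
  have hhmean : ∫ x in (0 : ℝ)..1, f x - c = 0 := by
    simp [intervalIntegral.integral_sub (hf.continuous.intervalIntegrable 0 1)
      intervalIntegrable_const, c]
  set r := birkhoffAverage ℝ (· + α) fun x => f x - c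
  have hr : ∀ N, ContDiff ℝ ∞ (r N) := fun N => (hh.birkhoffSum_add α N).const_smul _
  obtain ⟨K, hK⟩ := exists_iteratedDerivLE_of_periodic (m := n)
    (hf.of_le (by exact_mod_cast le_top)) hp one_ne_zero
  obtain ⟨N, hN, hN0⟩ := ((tendstoZeroCn_birkhoffAverage_add hα hh hhper hhmean n).comp_sub
    hΦ hf hr hK ε hε |>.and (eventually_ne_atTop 0)).exists
  obtain ⟨ψ, hψ, hψper, hψeq⟩ := exists_coboundary_eq_sub_birkhoffAverage hh hhper α hN0
  refine ⟨fun x => f x - r N x, ψ, hf.sub (hr N), fun x => ?_, hψ, hψper, fun x => ?_, hN⟩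
  · simp only [hp x, (hhper.birkhoffSum_add α N) x, r, birkhoffAverage]
  · rw [add_sub_assoc, ← hψeq]
    ring

/-- In the asymmetric case, any smooth `1`-periodic `p : ℝ → ℝ` with values in `(0,1)`
and `∫ ln p ≠ ∫ ln (1-p)` can be `C^∞`-approximated by `p'` for which
`ln(1-p') - ln p' = c + ψ(·+α) - ψ` for some constant `c ≠ 0` and smooth `ψ`. -/
theorem asymmetric_approx_coboundary_plus_constant (α : ℝ) (hα : Irrational α)
    (p : ℝ → ℝ) (hsm : ContDiff ℝ (⊤ : ℕ∞) p) (hper : Function.Periodic p 1)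
    (hrange : ∀ x, p x ∈ Set.Ioo (0:ℝ) 1)
    (hasym : ∫ x in (0:ℝ)..1, Real.log (p x) ≠ ∫ x in (0:ℝ)..1, Real.log (1 - p x))
    (n : ℕ) (ε : ℝ) (hε : 0 < ε) :
    ∃ p' : ℝ → ℝ, ContDiff ℝ (⊤ : ℕ∞) p' ∧ Function.Periodic p' 1 ∧
      (∀ x, p' x ∈ Set.Ioo (0:ℝ) 1) ∧
      (∃ c : ℝ, c ≠ 0 ∧ ∃ ψ : ℝ → ℝ, ContDiff ℝ (⊤ : ℕ∞) ψ ∧ Function.Periodic ψ 1 ∧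
        ∀ x, Real.log (1 - p' x) - Real.log (p' x) = c + ψ (x + α) - ψ x) ∧
      (∀ k ≤ n, ∀ x, |iteratedDeriv k (fun y => p y - p' y) x| < ε) := by
  have hlog₁ : ContDiff ℝ ∞ fun x => Real.log (1 - p x) :=
    (contDiff_const.sub hsm).log fun x => (sub_pos.2 (hrange x).2).ne'
  have hlog₂ : ContDiff ℝ ∞ fun x => Real.log (p x) := hsm.log fun x => (hrange x).1.ne'
  have hσ : ContDiff ℝ ∞ fun t => Real.sigmoid (-t) :=
    (contDiff_sigmoid.of_le le_top).comp contDiff_neg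
  obtain ⟨g, ψ, hg, hgper, hψ, hψper, hgψ, hclose⟩ := exists_mean_add_coboundary_near hα
    (hlog₁.sub hlog₂) (fun x => by simp only [hper x]) hσ n (half_pos hε)
  refine ⟨fun x => Real.sigmoid (-g x), hσ.comp hg, fun x => by simp only [hgper x],
    fun x => ⟨Real.sigmoid_pos _, Real.sigmoid_lt_one _⟩, ⟨_, ?_, ψ, hψ, hψper,
      fun x => (Real.log_one_sub_sigmoid_neg_sub_log _).trans (hgψ x)⟩, fun k hk x => ?_⟩
  · rw [intervalIntegral.integral_sub (hlog₁.continuous.intervalIntegrable 0 1)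
      (hlog₂.continuous.intervalIntegrable 0 1)]
    exact sub_ne_zero.2 hasym.symm
  · simp only [Real.sigmoid_neg_log_one_sub_sub_log (hrange _)] at hclose
    exact (hclose k hk x).trans_lt (half_lt_self hε)
end

section
/- Let d, M > 0 and let q be an integer with q > e^{e^{d+M}}. If V is a real trigonometric polynomial of degree at most d whose coefficients are all bounded in absolute value by M, then for any x ∈ 𝕋, |Σ_{j=0}^{q-1} e^{V(x + j/q)} - q ∫_𝕋 e^{V(θ)} dθ| < e^{-q}. -/
/-
The degree-`m` Taylor polynomial `∑_{n ≤ m} V^n / n!` of `e^V` is a trigonometric polynomial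
of degree `m d`. When `m d < q` the grid `x + j/q` integrates it exactly, since every frequency
`0 < |k| < q` sums to zero over the `q`-th roots of unity. The error therefore comes only from
the Taylor remainder, which is at most `2 B^{m+1}/(m+1)!` for `B = (2d+1)M ≥ sup |V|` and is
paid once in the sum and once in the integral. Take `m + 1 ≈ q/d`. Then
`B^{m+1}/(m+1)! ≤ (eB/(m+1))^{m+1}`, and `q > e^{e^{d+M}}` gives `eB/(m+1) ≤ e^{-2d}`, so the
error is at most `4q e^{-2q} < e^{-q}`.
-/

open scoped Nat
open Finset Real MeasureTheory

noncomputable def fourierMode (k : ℤ) (x : ℝ) : ℂ :=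
  Complex.exp (((2 * π : ℝ) : ℂ) * Complex.I * k * x)

noncomputable def trigPoly (N : ℕ) : Submodule ℂ (ℝ → ℂ) :=
  Submodule.span ℂ (fourierMode '' Set.Icc (-(N : ℤ)) N)

noncomputable def gridSum {E : Type*} [AddCommMonoid E] (q : ℕ) (f : ℝ → E) (x : ℝ) : E :=
  ∑ j ∈ range q, f (x + j / q)

namespace fourierMode

lemma add (k l : ℤ) : fourierMode (k + l) = fourierMode k * fourierMode l := by
  ext x
  simp only [fourierMode, Pi.mul_apply, ← Complex.exp_add]
  push_cast
  ring_nf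

@[simp] lemma zero : fourierMode 0 = 1 := by
  ext x
  simp [fourierMode]

lemma continuous (k : ℤ) : Continuous (fourierMode k) := by
  unfold fourierMode
  fun_prop

lemma norm_apply (k : ℤ) (x : ℝ) : ‖fourierMode k x‖ = 1 := by
  rw [fourierMode, show ((2 * π : ℝ) : ℂ) * Complex.I * k * x = ((2 * π * k * x : ℝ) : ℂ) * Complex.I
    by push_cast; ring]
  exact Complex.norm_exp_ofReal_mul_I _

@[simp] lemma apply_zero (k : ℤ) : fourierMode k 0 = 1 := by
  simp [fourierMode]

lemma apply_one (k : ℤ) : fourierMode k 1 = 1 := by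
  rw [fourierMode, ← Complex.exp_int_mul_two_pi_mul_I k]
  push_cast
  ring_nf

lemma apply_add_nat_div (k : ℤ) (x : ℝ) (q j : ℕ) :
    fourierMode k (x + j / q) = fourierMode k x * fourierMode k (1 / q) ^ j := by
  simp only [fourierMode, ← Complex.exp_nat_mul, ← Complex.exp_add]
  congr 1
  push_cast
  ring

lemma integral_eq_zero {k : ℤ} (hk : k ≠ 0) : ∫ θ in (0 : ℝ)..1, fourierMode k θ = 0 := by
  have hc : ((2 * π : ℝ) : ℂ) * Complex.I * k ≠ 0 := by
    simp [hk, Real.pi_ne_zero]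
  have := integral_exp_mul_complex hc (a := 0) (b := 1)
  simp only [Complex.ofReal_zero, Complex.ofReal_one, mul_zero, mul_one, Complex.exp_zero] at this
  have h1 : Complex.exp (((2 * π : ℝ) : ℂ) * Complex.I * k) = 1 := by
    simpa [fourierMode] using apply_one k
  simp only [fourierMode, this, h1, sub_self, zero_div]

lemma gridSum_eq_zero {k : ℤ} {q : ℕ} (hk : k ≠ 0) (hkq : |k| < q) (x : ℝ) :
    gridSum q (fourierMode k) x = 0 := by
  have hq : q ≠ 0 := by rintro rfl; have := abs_nonneg k; push_cast at hkq; omega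
  set ζ := fourierMode k (1 / q)
  have hζq : ζ ^ q = 1 := by
    have h := apply_add_nat_div k 0 q q
    rwa [zero_add, div_self (by exact_mod_cast hq), apply_one, apply_zero, one_mul, eq_comm] at h
  have hζ : ζ ≠ 1 := by
    intro h
    obtain ⟨n, hn⟩ := Complex.exp_eq_one_iff.mp h
    have hkn : (k : ℂ) = q * n := by
      push_cast at hn
      field_simp at hn
      exact hn
    exact hk (Int.eq_zero_of_abs_lt_dvd ⟨n, by exact_mod_cast hkn⟩ hkq)
  have hgeom : (∑ j ∈ range q, ζ ^ j) * (ζ - 1) = 0 := by rw [geom_sum_mul, hζq, sub_self]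
  simp only [gridSum, apply_add_nat_div k x q, ← mul_sum]
  exact mul_eq_zero_of_right _ ((mul_eq_zero.mp hgeom).resolve_right (sub_ne_zero.mpr hζ))

lemma gridSum_eq_integral {k : ℤ} {q : ℕ} (hkq : |k| < q) (x : ℝ) :
    gridSum q (fourierMode k) x = q * ∫ θ in (0 : ℝ)..1, fourierMode k θ := by
  rcases eq_or_ne k 0 with rfl | hk
  · simp [gridSum]
  · rw [gridSum_eq_zero hk hkq, integral_eq_zero hk, mul_zero]

end fourierMode

lemma norm_sum_mul_fourierMode_le {c : ℤ → ℂ} {M : ℝ} (hc : ∀ k, ‖c k‖ ≤ M) (N : ℕ) (x : ℝ) :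
    ‖∑ k ∈ Icc (-(N : ℤ)) N, c k * fourierMode k x‖ ≤ (2 * N + 1) * M :=
  calc ‖∑ k ∈ Icc (-(N : ℤ)) N, c k * fourierMode k x‖
      ≤ ∑ k ∈ Icc (-(N : ℤ)) N, ‖c k * fourierMode k x‖ := norm_sum_le _ _
    _ ≤ ∑ _k ∈ Icc (-(N : ℤ)) N, M := by
      gcongr with k
      rw [norm_mul, fourierMode.norm_apply, mul_one]
      exact hc k
    _ = (2 * N + 1) * M := by
      rw [sum_const, Int.card_Icc, nsmul_eq_mul, show (N + 1 - -N : ℤ).toNat = 2 * N + 1 by omega]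
      push_cast
      ring

namespace trigPoly

lemma fourierMode_mem {N : ℕ} {k : ℤ} (hk : |k| ≤ N) : fourierMode k ∈ trigPoly N :=
  Submodule.subset_span ⟨k, abs_le.mp hk, rfl⟩

lemma sum_mul_fourierMode_mem (c : ℤ → ℂ) (N : ℕ) :
    (fun x ↦ ∑ k ∈ Icc (-(N : ℤ)) N, c k * fourierMode k x) ∈ trigPoly N := by
  have : (fun x ↦ ∑ k ∈ Icc (-(N : ℤ)) N, c k * fourierMode k x)
      = ∑ k ∈ Icc (-(N : ℤ)) N, c k • fourierMode k := by
    ext x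
    simp
  rw [this]
  exact Submodule.sum_mem _ fun k hk ↦
    Submodule.smul_mem _ _ (fourierMode_mem (abs_le.mpr (mem_Icc.mp hk)))

lemma mono {N N' : ℕ} (h : N ≤ N') : trigPoly N ≤ trigPoly N' :=
  Submodule.span_mono (Set.image_mono (Set.Icc_subset_Icc (by omega) (by omega)))

lemma mul_le (N N' : ℕ) : trigPoly N * trigPoly N' ≤ trigPoly (N + N') := by
  rw [trigPoly, trigPoly, Submodule.span_mul_span]
  apply Submodule.span_mono
  rintro _ ⟨_, ⟨k, hk, rfl⟩, _, ⟨l, hl, rfl⟩, rfl⟩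
  refine ⟨k + l, ?_, fourierMode.add k l⟩
  simp only [Set.mem_Icc] at hk hl ⊢
  push_cast
  omega

lemma pow_mem {N : ℕ} {f : ℝ → ℂ} (hf : f ∈ trigPoly N) (n : ℕ) : f ^ n ∈ trigPoly (n * N) := by
  induction n with
  | zero => simpa using fourierMode_mem (N := 0) (k := 0) le_rfl
  | succ n ih =>
    rw [pow_succ, add_one_mul]
    exact mul_le _ _ (Submodule.mul_mem_mul ih hf)

lemma continuous {N : ℕ} {f : ℝ → ℂ} (hf : f ∈ trigPoly N) : Continuous f := by
  induction hf using Submodule.span_induction with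
  | mem f hf => obtain ⟨k, -, rfl⟩ := hf; exact fourierMode.continuous k
  | zero => exact continuous_const
  | add f g _ _ hf hg => exact hf.add hg
  | smul a f _ hf => exact hf.const_smul a

lemma gridSum_eq_integral {N q : ℕ} {f : ℝ → ℂ} (hf : f ∈ trigPoly N) (hNq : N < q) (x : ℝ) :
    gridSum q f x = q * ∫ θ in (0 : ℝ)..1, f θ := by
  induction hf using Submodule.span_induction with
  | mem f hf =>
    obtain ⟨k, hk, rfl⟩ := hf
    exact fourierMode.gridSum_eq_integral (lt_of_le_of_lt (abs_le.mpr hk) (by exact_mod_cast hNq)) x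
  | zero => simp [gridSum]
  | add f g hf' hg' hf hg =>
    simp only [gridSum, Pi.add_apply, sum_add_distrib] at hf hg ⊢
    rw [intervalIntegral.integral_add ((continuous hf').intervalIntegrable _ _)
      ((continuous hg').intervalIntegrable _ _), hf, hg, mul_add]
  | smul a f _ hf =>
    simp only [gridSum, Pi.smul_apply, smul_eq_mul, ← mul_sum,
      intervalIntegral.integral_const_mul] at hf ⊢
    rw [hf, mul_left_comm]

lemma gridSum_eq_integral_of_ofReal_mem {N q : ℕ} {g : ℝ → ℝ} (hg : (fun x ↦ (g x : ℂ)) ∈ trigPoly N)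
    (hNq : N < q) (x : ℝ) : gridSum q g x = q * ∫ θ in (0 : ℝ)..1, g θ := by
  apply Complex.ofReal_injective
  have := gridSum_eq_integral hg hNq x
  push_cast [gridSum] at this ⊢
  rw [this, intervalIntegral.integral_ofReal]

lemma ofReal_sum_pow_div_factorial_mem {N : ℕ} {g : ℝ → ℝ} (hg : (fun x ↦ (g x : ℂ)) ∈ trigPoly N)
    (m : ℕ) : (fun x ↦ ((∑ n ∈ range (m + 1), g x ^ n / n.factorial : ℝ) : ℂ)) ∈ trigPoly (m * N) := by
  have : (fun x ↦ ((∑ n ∈ range (m + 1), g x ^ n / n.factorial : ℝ) : ℂ))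
      = ∑ n ∈ range (m + 1), ((n.factorial : ℂ)⁻¹) • (fun x ↦ (g x : ℂ)) ^ n := by
    ext x
    push_cast
    simp [div_eq_inv_mul]
  rw [this]
  refine Submodule.sum_mem _ fun n hn ↦ Submodule.smul_mem _ _ (mono ?_ (pow_mem hg n))
  exact Nat.mul_le_mul_right N (Nat.lt_succ_iff.mp (mem_range.mp hn))

end trigPoly

lemma abs_gridSum_sub_mul_integral_le {f g : ℝ → ℝ} {τ : ℝ} {q : ℕ} {x : ℝ}
    (hf : IntervalIntegrable f volume 0 1) (hg : IntervalIntegrable g volume 0 1)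
    (hfg : ∀ y, |f y - g y| ≤ τ) (hg_grid : gridSum q g x = q * ∫ θ in (0 : ℝ)..1, g θ) :
    |gridSum q f x - q * ∫ θ in (0 : ℝ)..1, f θ| ≤ 2 * q * τ := by
  have hsum : |gridSum q f x - gridSum q g x| ≤ q * τ := by
    rw [gridSum, gridSum, ← sum_sub_distrib]
    refine (abs_sum_le_sum_abs _ _).trans ?_
    simpa using sum_le_sum fun j (_ : j ∈ range q) ↦ hfg (x + j / q)
  have hint : |(∫ θ in (0 : ℝ)..1, f θ) - ∫ θ in (0 : ℝ)..1, g θ| ≤ τ := by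
    rw [← intervalIntegral.integral_sub hf hg]
    simpa using intervalIntegral.norm_integral_le_of_norm_le_const (a := 0) (b := 1)
      (f := fun y ↦ f y - g y) fun y _ ↦ hfg y
  have hq : (0 : ℝ) ≤ q := q.cast_nonneg
  calc |gridSum q f x - q * ∫ θ in (0 : ℝ)..1, f θ|
      = |(gridSum q f x - gridSum q g x)
          - q * ((∫ θ in (0 : ℝ)..1, f θ) - ∫ θ in (0 : ℝ)..1, g θ)| := by
        rw [hg_grid]
        ring_nf
    _ ≤ |gridSum q f x - gridSum q g x|
          + q * |(∫ θ in (0 : ℝ)..1, f θ) - ∫ θ in (0 : ℝ)..1, g θ| := by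
        rw [← abs_of_nonneg hq, ← abs_mul, abs_of_nonneg hq]
        exact abs_sub _ _
    _ ≤ q * τ + q * τ := by gcongr
    _ = 2 * q * τ := by ring

lemma abs_exp_sub_sum_range_le {x B : ℝ} {n : ℕ} (hxB : |x| ≤ B) (hBn : 2 * B ≤ n) :
    |exp x - ∑ m ∈ range n, x ^ m / m !| ≤ B ^ n / n ! * 2 := by
  have hxc : ‖(x : ℂ)‖ / n.succ ≤ 1 / 2 := by
    rw [Complex.norm_real, norm_eq_abs, div_le_iff₀ (by positivity)]
    push_cast
    linarith
  refine le_trans ?_ (by gcongr : |x| ^ n / n ! * 2 ≤ B ^ n / n ! * 2)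
  convert Complex.exp_bound' hxc using 1 <;> norm_cast

lemma exists_mul_lt_le_add_one_mul {d q : ℕ} (hd : 0 < d) (hq : 0 < q) :
    ∃ n, n * d < q ∧ q ≤ (n + 1) * d := by
  refine ⟨(q - 1) / d, ?_, ?_⟩
  · have := Nat.div_mul_le_self (q - 1) d
    omega
  · have := Nat.lt_div_mul_add (a := q - 1) hd
    rw [add_one_mul]
    omega

lemma five_lt_exp_exp {x : ℝ} (hx : 1 ≤ x) : 5 < exp (exp x) := by
  have h2 : 2 < exp x := by linarith [add_one_lt_exp (by linarith : x ≠ 0)]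
  nlinarith [quadratic_le_exp_of_nonneg (by linarith : 0 ≤ exp x)]

lemma two_mul_add_one_add_log_add_log_le_exp {d M : ℝ} (hd : 1 ≤ d) (hM : 0 < M) :
    2 * d + 1 + log d + log ((2 * d + 1) * M) ≤ exp (d + M) := by
  have he : 27 / 10 < exp 1 := lt_trans (by norm_num) exp_one_gt_d9
  -- tangent line of `log` at `e^{-d}`: its `M`-term cancels against `e^d M ≤ e^{d+M} - e^d`
  have hlogM : log M ≤ exp d * M - 1 - d := by
    have := log_le_sub_one_of_pos (mul_pos (exp_pos d) hM)
    rw [log_mul (exp_pos d).ne' hM.ne', log_exp] at this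
    linarith
  have hlogd : log d ≤ d - 1 := log_le_sub_one_of_pos (by linarith)
  have hlog2d : log (2 * d + 1) ≤ (2 * d + 1) / (27 / 10) := by
    have := log_le_sub_one_of_pos (show 0 < (2 * d + 1) / exp 1 by positivity)
    rw [log_div (by linarith) (exp_pos 1).ne', log_exp] at this
    have : (2 * d + 1) / exp 1 ≤ (2 * d + 1) / (27 / 10) := by gcongr
    linarith
  have hexpd : 1 + d + d ^ 2 / 2 ≤ exp d := quadratic_le_exp_of_nonneg (by linarith)
  have hexpM : exp d * (1 + M) ≤ exp (d + M) := by
    rw [exp_add]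
    gcongr
    linarith [add_one_le_exp M]
  rw [log_mul (by linarith) hM.ne']
  -- reduces to `2d - 1 + (2d + 1)/2.7 ≤ 1 + d + d²/2`, a quadratic with negative discriminant
  nlinarith [sq_nonneg (d - 7 / 4)]

lemma exp_one_mul_div_le_exp_neg {d M : ℝ} {q n : ℕ} (hd : 1 ≤ d) (hM : 0 < M)
    (hq : exp (exp (d + M)) < q) (hqn : q ≤ n * d) :
    exp 1 * ((2 * d + 1) * M) / n ≤ exp (-(2 * d)) := by
  have hq0 : (0 : ℝ) < q := (exp_pos _).trans hq
  have hn0 : (0 : ℝ) < n := pos_of_mul_pos_left (hq0.trans_le hqn) (by linarith)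
  have hq_lower : exp 1 * d * ((2 * d + 1) * M) * exp (2 * d) ≤ q :=
    calc exp 1 * d * ((2 * d + 1) * M) * exp (2 * d)
        = exp (2 * d + 1 + log d + log ((2 * d + 1) * M)) := by
          rw [exp_add, exp_add, exp_add, exp_log (by linarith), exp_log (by positivity)]
          ring
      _ ≤ exp (exp (d + M)) := exp_le_exp.mpr (two_mul_add_one_add_log_add_log_le_exp hd hM)
      _ ≤ q := hq.le
  rw [div_le_iff₀ hn0, exp_neg, ← div_eq_inv_mul, le_div_iff₀ (exp_pos _)]
  nlinarith [exp_pos 1, exp_pos (2 * d)]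

lemma pow_div_factorial_le_exp_one_mul_div_pow {B : ℝ} (hB : 0 ≤ B) (m : ℕ) :
    B ^ m / m ! ≤ (exp 1 * B / m) ^ m := by
  rcases m.eq_zero_or_pos with rfl | hm
  · simp
  have hm' : (0 : ℝ) < m := by exact_mod_cast hm
  calc B ^ m / m ! = (B / m) ^ m * ((m : ℝ) ^ m / m !) := by
        rw [div_pow]
        field_simp
    _ ≤ (B / m) ^ m * exp m := by gcongr; exact pow_div_factorial_le_exp (x := m) hm'.le m
    _ = (exp 1 * B / m) ^ m := by
        rw [mul_div_assoc, mul_pow, ← exp_nat_mul, mul_one, mul_comm]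

lemma four_mul_mul_pow_lt_exp_neg {ρ d : ℝ} {q m : ℕ} (hρ : 0 ≤ ρ) (hρd : ρ ≤ exp (-(2 * d)))
    (hqm : q ≤ m * d) (hq : 6 ≤ q) : 4 * q * ρ ^ m < exp (-q) := by
  have hq' : (6 : ℝ) ≤ q := by exact_mod_cast hq
  calc 4 * q * ρ ^ m ≤ 4 * q * exp (-(2 * d)) ^ m := by gcongr
    _ = 4 * q * exp (-(2 * (m * d))) := by
        rw [← exp_nat_mul]
        ring_nf
    _ ≤ 4 * q * exp (-(2 * q)) := by gcongr
    _ < exp q * exp (-(2 * q)) := by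
        gcongr
        nlinarith [quadratic_le_exp_of_nonneg (by linarith : (0 : ℝ) ≤ q)]
    _ = exp (-q) := by rw [← exp_add]; ring_nf

/-- If `V` is a real-valued trigonometric polynomial of degree at most `d` whose
coefficients are bounded by `M`, and `q > e^{e^{d+M}}`, then for any `x` the average
of `e^V` over the grid `x + j/q`, `j = 0,…,q-1`, is within `e^{-q}` of `q ∫ e^V`. -/
theorem trig_poly_exp_sum (d : ℕ) (M : ℝ) (hd : 0 < d) (hM : 0 < M)
    (q : ℕ) (hq : Real.exp (Real.exp ((d : ℝ) + M)) < (q : ℝ))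
    (c : ℤ → ℂ) (hc : ∀ k, ‖c k‖ ≤ M)
    (V : ℝ → ℝ)
    (hV : ∀ x : ℝ, (V x : ℂ) = ∑ k ∈ Finset.Icc (-(d:ℤ)) (d:ℤ),
        c k * Complex.exp (((2 * Real.pi : ℝ) : ℂ) * Complex.I * (k : ℂ) * (x : ℂ))) :
    ∀ x : ℝ,
      |∑ j ∈ Finset.range q, Real.exp (V (x + (j : ℝ) / (q : ℝ)))
          - (q : ℝ) * ∫ θ in (0:ℝ)..1, Real.exp (V θ)| < Real.exp (-(q : ℝ)) := by
  intro x
  set B : ℝ := (2 * d + 1) * M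
  have hd1 : (1 : ℝ) ≤ d := by exact_mod_cast hd
  have hq6 : 6 ≤ q := by exact_mod_cast (five_lt_exp_exp (by linarith)).trans hq
  obtain ⟨n, hnq, hqn⟩ := exists_mul_lt_le_add_one_mul hd (by omega : 0 < q)
  have hqn' : (q : ℝ) ≤ (n + 1 : ℕ) * d := by exact_mod_cast hqn
  have hV' (y : ℝ) : (V y : ℂ) = ∑ k ∈ Icc (-(d : ℤ)) d, c k * fourierMode k y := hV y
  have hVmem : (fun y ↦ (V y : ℂ)) ∈ trigPoly d := by
    simpa only [← hV'] using trigPoly.sum_mul_fourierMode_mem c d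
  have hVc : Continuous V := by
    simpa [Function.comp_def] using Complex.continuous_re.comp (trigPoly.continuous hVmem)
  have hVB (y : ℝ) : |V y| ≤ B := by
    simpa [← hV'] using norm_sum_mul_fourierMode_le hc d y
  have hρ := exp_one_mul_div_le_exp_neg hd1 hM hq hqn'
  have hBn : 2 * B ≤ (n + 1 : ℕ) := by
    rw [div_le_iff₀ (by positivity)] at hρ
    nlinarith [exp_le_one_iff.mpr (by linarith : -(2 * (d : ℝ)) ≤ 0), add_one_le_exp (1 : ℝ)]
  calc _ ≤ 2 * q * (B ^ (n + 1) / (n + 1)! * 2) :=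
        abs_gridSum_sub_mul_integral_le (f := fun y ↦ exp (V y))
          ((by fun_prop : Continuous fun y ↦ exp (V y)).intervalIntegrable 0 1)
          ((by fun_prop : Continuous fun y ↦ ∑ k ∈ range (n + 1), V y ^ k / k !).intervalIntegrable 0 1)
          (fun y ↦ abs_exp_sub_sum_range_le (hVB y) hBn)
          (trigPoly.gridSum_eq_integral_of_ofReal_mem
            (trigPoly.ofReal_sum_pow_div_factorial_mem hVmem n) hnq x)
    _ = 4 * q * (B ^ (n + 1) / (n + 1)!) := by ring
    _ ≤ 4 * q * (exp 1 * B / (n + 1 : ℕ)) ^ (n + 1) := by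
        gcongr
        exact pow_div_factorial_le_exp_one_mul_div_pow (by positivity) (n + 1)
    _ < exp (-q) := four_mul_mul_pow_lt_exp_neg (by positivity) hρ hqn' hq6
end

section
/- Enhanced Borel–Cantelli lemma: let (C_n)_{n≥1} be a sequence of events such that for each k ≥ 1, Σ_{n=k}^{∞} P(C_n | ∩_{j=k}^{n-1} C_j^c) = +∞ (where the conditional probability is interpreted as 0 when the conditioning event has probability 0 unless divergence is forced). Then with probability 1, infinitely many of the events C_n occur. -/
open MeasureTheory Set Filter ENNReal

/-! Fix `k` and let `D n = ⋂_{k ≤ j < k + n} C_jᶜ`. The numerators `P(C_{k+n} ∩ D n)` are the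
probabilities of the disjoint events "the first `C_j` with `j ≥ k` to occur is `C_{k+n}`", so they
sum to at most `1`. If `P(D n)` stayed above some `L > 0`, the series would therefore be at most
`1 / L < ∞`; so `P(D n)` tends to `0` and no tail `⋂_{j ≥ k} C_jᶜ` has positive probability, which
means that the complement of `limsup C` is null. -/

theorem ENNReal.tsum_div_le_tsum_div_iInf {ι : Type*} (a b : ι → ℝ≥0∞) :
    ∑' i, a i / b i ≤ (∑' i, a i) / ⨅ i, b i := by
  simp only [div_eq_mul_inv, ← ENNReal.tsum_mul_right]
  exact ENNReal.tsum_le_tsum fun i => by gcongr; exact iInf_le b i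

theorem MeasureTheory.measure_iInter_compl_eq_zero_of_tsum_disjointed_div_eq_top
    {α : Type*} [MeasurableSpace α] {μ : Measure α} [IsFiniteMeasure μ] {s : ℕ → Set α}
    (hs : ∀ n, MeasurableSet (s n))
    (h : ∑' n, μ (disjointed s n) / μ (⋂ j < n, (s j)ᶜ) = ∞) :
    μ (⋂ n, (s n)ᶜ) = 0 := by
  set L := ⨅ n, μ (⋂ j < n, (s j)ᶜ)
  have hle : μ (⋂ n, (s n)ᶜ) ≤ L :=
    le_iInf fun n => measure_mono <| subset_iInter₂ fun j _ => iInter_subset _ j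
  suffices hL : L = 0 from nonpos_iff_eq_zero.1 (hL ▸ hle)
  by_contra hL
  refine h.not_lt (lt_of_le_of_lt (ENNReal.tsum_div_le_tsum_div_iInf _ _) ?_)
  rw [← measure_iUnion (disjoint_disjointed s) (.disjointed hs)]
  exact ENNReal.div_lt_top (measure_ne_top μ _) hL

theorem Finset.iInter_mem_Ico_self_add {α : Type*} (s : ℕ → Set α) (k n : ℕ) :
    ⋂ j ∈ Finset.Ico k (k + n), s j = ⋂ i < n, s (k + i) := by
  ext x
  simp only [mem_iInter, Finset.mem_Ico]
  refine ⟨fun h i hi => h _ ⟨by omega, by omega⟩, fun h j hj => ?_⟩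
  simpa [Nat.add_sub_cancel' hj.1] using h (j - k) (by omega)

theorem Filter.compl_limsup_eq_iUnion_iInter_compl {α : Type*} (s : ℕ → Set α) :
    (limsup s atTop)ᶜ = ⋃ k, ⋂ i, (s (k + i))ᶜ := by
  simp only [limsup_eq_iInf_iSup_of_nat', iInf_eq_iInter, iSup_eq_iUnion, compl_iInter,
    compl_iUnion, add_comm]

/-- Enhanced Borel–Cantelli lemma: if for each `k` the series of conditional
probabilities `P(C_n | ⋂_{j=k}^{n-1} C_jᶜ)` diverges (in `ℝ≥0∞`, where `0/0 = 0` and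
`a/0 = ⊤` for `a ≠ 0`), then almost surely infinitely many of the events `C_n` occur. -/
theorem enhanced_borel_cantelli {Ω : Type*} [MeasurableSpace Ω] (P : Measure Ω)
    [IsProbabilityMeasure P] (C : ℕ → Set Ω) (hC : ∀ n, MeasurableSet (C n))
    (hdiv : ∀ k : ℕ,
      (∑' n : ℕ, P (C (k + n) ∩ ⋂ j ∈ Finset.Ico k (k + n), (C j)ᶜ)
          / P (⋂ j ∈ Finset.Ico k (k + n), (C j)ᶜ)) = ⊤) :
    P (Filter.limsup C Filter.atTop) = 1 := by
  have htail : ∀ k, P (⋂ i, (C (k + i))ᶜ) = 0 := fun k => by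
    refine measure_iInter_compl_eq_zero_of_tsum_disjointed_div_eq_top (fun i => hC (k + i)) ?_
    simpa only [disjointed_eq_inter_compl, Finset.iInter_mem_Ico_self_add] using hdiv k
  have hnull : P (limsup C atTop)ᶜ = 0 := by
    rw [compl_limsup_eq_iUnion_iInter_compl]
    exact measure_iUnion_null htail
  rw [measure_congr (ae_eq_univ.2 hnull), measure_univ]
end
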